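/- arXiv:1411.2830 — 2 statements merged into one kernel-verified Lean document; each statement's English description precedes it below -/
import Mathlib

section
/- Let R be a commutative integral domain with field of fractions K, let S be a subring of K containing R (so that S is an R-algebra and an integral domain), and let M be an S-module that is torsion-free over S (its S-torsion submodule is zero). Then the canonical S-linear map μ : S ⊗_R M → M defined by μ(s ⊗ m) = s • m is surjective and its kernel is exactly the S-torsion submodule of S ⊗_R M. Consequently, the induced S-linear map (S ⊗_R M) / 𝒯_S(S ⊗_R M) → M is an isomorphism of S-modules. -/
open TensorProduct

/-- Let `R` be a domain with fraction field `K`, let `S` be a subring of `K`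
containing `R` (encoded as intermediate `R`-algebra `S` embedding into `K`), and let
`M` be a torsion-free `S`-module. Then the canonical `S`-linear map
`μ : S ⊗[R] M → M`, `s ⊗ m ↦ s • m`, is surjective with kernel exactly the
`S`-torsion submodule of `S ⊗[R] M`; consequently the induced map
`(S ⊗[R] M) / 𝒯_S(S ⊗[R] M) → M` is an isomorphism of `S`-modules. -/
theorem baseChange_mod_torsion_iso (R S K : Type*) [CommRing R] [IsDomain R]
    [CommRing S] [IsDomain S] [Field K] [Algebra R K] [IsFractionRing R K]
    [Algebra R S] [Algebra S K] [IsScalarTower R S K]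
    (hSK : Function.Injective (algebraMap S K))
    (M : Type*) [AddCommGroup M] [Module R M] [Module S M] [IsScalarTower R S M]
    (hM : Submodule.torsion S M = ⊥)
    (μ : S ⊗[R] M →ₗ[S] M) (hμ : ∀ (s : S) (m : M), μ (s ⊗ₜ[R] m) = s • m) :
    Function.Surjective μ ∧
      LinearMap.ker μ = Submodule.torsion S (S ⊗[R] M) ∧
      Nonempty (((S ⊗[R] M) ⧸ Submodule.torsion S (S ⊗[R] M)) ≃ₗ[S] M) := by
  have hRS : Function.Injective (algebraMap R S) := by
    intro a b h
    have : algebraMap R K a = algebraMap R K b := by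
      rw [IsScalarTower.algebraMap_apply R S K, IsScalarTower.algebraMap_apply R S K, h]
    exact IsFractionRing.injective R K this
  -- key lemma: every element becomes a pure tensor `1 ⊗ m` after scaling by a nonzero `b : R`
  have key : ∀ x : S ⊗[R] M, ∃ b : R, b ≠ 0 ∧
      (algebraMap R S b) • x = (1 : S) ⊗ₜ[R] ((algebraMap R S b) • μ x) := by
    intro x
    induction x using TensorProduct.induction_on with
    | zero =>
        exact ⟨1, one_ne_zero, by simp⟩
    | tmul s m =>
        obtain ⟨⟨a, b⟩, hab⟩ := IsLocalization.surj (nonZeroDivisors R) (algebraMap S K s)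
        have hb0 : (b : R) ≠ 0 := nonZeroDivisors.ne_zero b.2
        have hba : algebraMap R S b * s = algebraMap R S a := by
          apply hSK
          rw [map_mul, ← IsScalarTower.algebraMap_apply R S K,
            ← IsScalarTower.algebraMap_apply R S K, mul_comm]
          exact hab
        refine ⟨b, hb0, ?_⟩
        have h1 : (algebraMap R S b) • (s ⊗ₜ[R] m) = (algebraMap R S b * s) ⊗ₜ[R] m := rfl
        rw [h1, hba, hμ, Algebra.algebraMap_eq_smul_one (A := S) a]
        rw [smul_tmul]
        congr 1
        rw [smul_smul, hba]
        rw [algebraMap_smul]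
    | add x y hx hy =>
        obtain ⟨b₁, hb₁, h₁⟩ := hx
        obtain ⟨b₂, hb₂, h₂⟩ := hy
        refine ⟨b₁ * b₂, mul_ne_zero hb₁ hb₂, ?_⟩
        have sm : ∀ (b : R) (m : M), (algebraMap R S b) • ((1 : S) ⊗ₜ[R] m) =
            (1 : S) ⊗ₜ[R] ((algebraMap R S b) • m) := by
          intro b m
          rw [algebraMap_smul, smul_tmul', smul_tmul, algebraMap_smul]
        have lx : (algebraMap R S b₁ * algebraMap R S b₂) • x =
            (1 : S) ⊗ₜ[R] ((algebraMap R S b₁ * algebraMap R S b₂) • μ x) := by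
          rw [show algebraMap R S b₁ * algebraMap R S b₂
              = algebraMap R S b₂ * algebraMap R S b₁ from mul_comm _ _,
            mul_smul, h₁, sm, ← mul_smul]
        have ly : (algebraMap R S b₁ * algebraMap R S b₂) • y =
            (1 : S) ⊗ₜ[R] ((algebraMap R S b₁ * algebraMap R S b₂) • μ y) := by
          rw [mul_smul, h₂, sm, ← mul_smul]
        rw [map_mul, smul_add, lx, ly, map_add, smul_add, tmul_add]
  have hsurj : Function.Surjective μ := by
    intro m
    exact ⟨(1 : S) ⊗ₜ[R] m, by rw [hμ, one_smul]⟩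
  have hker : LinearMap.ker μ = Submodule.torsion S (S ⊗[R] M) := by
    ext x
    constructor
    · intro hx
      obtain ⟨b, hb, h⟩ := key x
      have hbS : algebraMap R S b ≠ 0 := fun h0 => hb (hRS (by rw [h0, map_zero]))
      refine ⟨⟨algebraMap R S b, mem_nonZeroDivisors_of_ne_zero hbS⟩, ?_⟩
      simp only [Submonoid.smul_def]
      rw [h, LinearMap.mem_ker.mp hx, smul_zero, tmul_zero]
    · rintro ⟨⟨s, hs⟩, hsx⟩
      have : s • μ x = 0 := by
        rw [← map_smul, show s • x = 0 from hsx, map_zero]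
      have : μ x ∈ Submodule.torsion S M := ⟨⟨s, hs⟩, this⟩
      rw [hM] at this
      exact LinearMap.mem_ker.mpr this
  exact ⟨hsurj, hker,
    ⟨(Submodule.quotEquivOfEq _ _ hker.symm).trans (μ.quotKerEquivOfSurjective hsurj)⟩⟩
end

section
/- Let R be a commutative local integral domain with field of fractions K, and let S be a subring of K with R ⊆ S. If there exist an integer n ≥ 1 and an isomorphism of R-modules S^n ≅ R^n (where S is regarded as an R-module), then S = R. -/
/-- Any two elements of the fraction field are `R`-linearly dependent. -/
lemma not_linearIndependent_pair_fraction (R K : Type*) [CommRing R] [IsDomain R]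
    [Field K] [Algebra R K] [IsFractionRing R K] (x y : K) (hy : y ≠ 0) :
    ¬ LinearIndependent R ![x, y] := by
  intro hli
  obtain ⟨⟨a, b⟩, hx⟩ := IsLocalization.surj (nonZeroDivisors R) x
  obtain ⟨⟨c, d⟩, hy'⟩ := IsLocalization.surj (nonZeroDivisors R) y
  have key : (c * (b : R)) • x + (-(a * (d : R))) • y = 0 := by
    simp only [Algebra.smul_def, map_mul, map_neg, neg_mul]
    linear_combination (algebraMap R K c) * hx - (algebraMap R K a) * hy'
  have := (LinearIndependent.pair_iff.mp hli _ _ key).1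
  have hd : algebraMap R K (d : R) ≠ 0 := fun h =>
    nonZeroDivisors.ne_zero d.2 (IsFractionRing.injective R K (by rw [h, map_zero]))
  have hc : c ≠ 0 := by
    rintro rfl
    rw [map_zero] at hy'
    rcases mul_eq_zero.mp hy' with h | h
    · exact hy h
    · exact hd h
  have hb : (b : R) ≠ 0 := nonZeroDivisors.ne_zero b.2
  exact mul_ne_zero hc hb this

/-- Let `R` be a local domain with fraction field `K`, and let `S` be a subring of `K`
containing `R` (i.e. an `R`-subalgebra of `K`). If `Sⁿ ≅ Rⁿ` as `R`-modules for some
`n ≥ 1`, then `S = R` (i.e. `S` is the bottom subalgebra, the image of `R` in `K`). -/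
theorem subalgebra_eq_bot_of_free (R K : Type*) [CommRing R] [IsDomain R] [IsLocalRing R]
    [Field K] [Algebra R K] [IsFractionRing R K]
    (S : Subalgebra R K) (n : ℕ) (hn : 1 ≤ n)
    (h : Nonempty ((Fin n → S) ≃ₗ[R] (Fin n → R))) :
    S = ⊥ := by
  obtain ⟨e⟩ := h
  haveI : Nonempty (Fin n) := ⟨⟨0, hn⟩⟩
  classical
  -- S is a finite R-module
  haveI hFin : Module.Finite R (Fin n → S) := Module.Finite.equiv e.symm
  haveI : Module.Finite R S :=
    Module.Finite.of_surjective (LinearMap.proj (R := R) (φ := fun _ : Fin n => S) ⟨0, hn⟩)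
      (fun s => ⟨fun _ => s, rfl⟩)
  -- S is projective: it is a direct summand of (Fin n → S) ≅ Rⁿ which is free
  haveI : Module.Projective R (Fin n → S) := Module.Projective.of_equiv e.symm
  haveI : Module.Projective R S :=
    Module.Projective.of_split (LinearMap.single R (fun _ : Fin n => S) ⟨0, hn⟩)
      (LinearMap.proj ⟨0, hn⟩) (by ext s; simp)
  haveI : Module.FinitePresentation R S := Module.finitePresentation_of_projective R S
  haveI : Module.Free R S := Module.free_of_flat_of_isLocalRing
  -- No zero smul divisors
  haveI : NoZeroSMulDivisors R S := by
    constructor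
    intro r s hrs
    have : algebraMap R K r * (s : K) = 0 := by
      rw [← Algebra.smul_def]
      exact_mod_cast congrArg (Subtype.val) hrs
    rcases mul_eq_zero.mp this with h' | h'
    · exact Or.inl (IsFractionRing.injective R K (by rw [h', map_zero]))
    · exact Or.inr (Subtype.ext h')
  -- finrank R S = 1
  have hpos : 0 < Module.finrank R S := by
    rw [Module.finrank_pos_iff]
    exact ⟨1, 0, fun h1 => one_ne_zero (congrArg (Subtype.val) h1)⟩
  have hle : Module.finrank R S ≤ 1 := by
    by_contra hgt
    push_neg at hgt
    set b := Module.finBasis R S with hb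
    set i0 : Fin (Module.finrank R S) := ⟨0, by omega⟩ with hi0
    set i1 : Fin (Module.finrank R S) := ⟨1, hgt⟩ with hi1
    have hli : LinearIndependent R ![((b i0 : S) : K), ((b i1 : S) : K)] := by
      have hmap : LinearIndependent R (fun i => ((b i : S) : K)) :=
        b.linearIndependent.map' S.val.toLinearMap (by
          rw [LinearMap.ker_eq_bot]
          exact Subtype.val_injective)
      have := hmap.comp ![i0, i1] (by
        intro i j hij
        fin_cases i <;> fin_cases j <;> simp_all [hi0, hi1, Fin.ext_iff])
      convert this using 1
      ext i
      fin_cases i <;> rfl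
    have hbz : ((b i1 : S) : K) ≠ 0 := by
      intro h'
      exact b.ne_zero i1 (Subtype.ext h')
    exact not_linearIndependent_pair_fraction R K _ _ hbz hli
  have heq : Module.finrank R S = 1 := le_antisymm hle hpos
  -- Basis of size 1
  set b := Module.finBasisOfFinrankEq R S heq with hb
  set x : S := b 0 with hx
  have hrepr : ∀ s : S, s = (b.repr s 0) • x := by
    intro s
    conv_lhs => rw [← b.sum_repr s]
    rw [Finset.sum_eq_single 0 (fun i _ hi => absurd (Subsingleton.elim i 0) hi)
      (fun h => absurd (Finset.mem_univ 0) h)]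
  -- x ≠ 0 in K
  have hx1 : ∃ a : R, (1 : S) = a • x := ⟨b.repr 1 0, hrepr 1⟩
  have hxne : (x : K) ≠ 0 := by
    obtain ⟨a, ha⟩ := hx1
    intro h'
    have : ((1 : S) : K) = algebraMap R K a * (x : K) := by
      rw [ha]; push_cast [Algebra.smul_def]; rfl
    rw [h', mul_zero] at this
    exact one_ne_zero this
  -- x * x = c • x forces x = algebraMap c
  obtain ⟨c, hc⟩ : ∃ c : R, x * x = c • x := ⟨b.repr (x * x) 0, hrepr (x * x)⟩
  have hxc : (x : K) = algebraMap R K c := by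
    have : (x : K) * (x : K) = algebraMap R K c * (x : K) := by
      have := congrArg (Subtype.val) hc
      push_cast [Algebra.smul_def] at this
      exact this
    exact mul_right_cancel₀ hxne this
  -- conclude
  apply le_antisymm _ bot_le
  intro s hs
  rw [Algebra.mem_bot]
  obtain ⟨d, hd⟩ : ∃ d : R, (⟨s, hs⟩ : S) = d • x := ⟨b.repr ⟨s, hs⟩ 0, hrepr ⟨s, hs⟩⟩
  refine ⟨d * c, ?_⟩
  have := congrArg (Subtype.val) hd
  push_cast [Algebra.smul_def] at this
  rw [this, hxc, map_mul]
end
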